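/- arXiv:2010.05220 — 9 statements merged into one kernel-verified Lean document; each statement's English description precedes it below -/
import Mathlib

section
/- Consider a response-function model: a latent variable U with distribution q on a finite type, a response function f_Y : U → ({0,1} → {0,1}) assigning potential outcomes Y(x), and f_O : U → {0,1} determining observation status O (O may depend on U and Y but not on X, matching Figure 1b). X is independent of U (randomized). Define θ = P(Y(1)=1) − P(Y(0)=1) and p_{y1.x} = P(Y(x)=y, O=1). Then θ ≥ p_{01.0} + p_{11.1} − 1. -/
open Finset

open scoped Classical in
/-- Probability of event `A` under (finitely supported) weights `w`. -/
noncomputable def pr {Ω : Type*} [Fintype Ω] (w : Ω → ℝ) (A : Ω → Prop) : ℝ :=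
  ∑ ω ∈ Finset.univ.filter A, w ω

/-- Conditional probability of `A` given `B`. -/
noncomputable def cpr {Ω : Type*} [Fintype Ω] (w : Ω → ℝ) (A B : Ω → Prop) : ℝ :=
  pr w (fun ω => A ω ∧ B ω) / pr w B

/-- Figure 1b response-function model (latent `U` independent of
randomized `X`, potential outcomes `fY u x`, observation status `fO u`), lower bound
`θ ≥ p_{01.0} + p_{11.1} − 1` where `p y x = P(Y(x) = y, O = 1)`. -/
theorem fig1b_lower_first {U : Type*} [Fintype U]
    (q : U → ℝ) (hq : ∀ u, 0 ≤ q u) (hqsum : ∑ u, q u = 1)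
    (fY : U → Fin 2 → Fin 2) (fO : U → Fin 2)
    (θ : ℝ)
    (hθ : θ = pr q (fun u => fY u 1 = 1) - pr q (fun u => fY u 0 = 1))
    (p : Fin 2 → Fin 2 → ℝ)
    (hp : ∀ y x, p y x = pr q (fun u => fY u x = y ∧ fO u = 1)) :
    p 0 0 + p 1 1 - 1 ≤ θ := by
  classical
  have mono : ∀ (A B : U → Prop), (∀ u, A u → B u) → pr q A ≤ pr q B := by
    intro A B h
    apply Finset.sum_le_sum_of_subset_of_nonneg
    · intro u hu
      simp only [Finset.mem_filter, Finset.mem_univ, true_and] at hu ⊢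
      exact h u hu
    · intro u _ _; exact hq u
  have h1 : p 1 1 ≤ pr q (fun u => fY u 1 = 1) := by
    rw [hp]; exact mono _ _ (fun u h => h.1)
  have h0 : p 0 0 ≤ pr q (fun u => fY u 0 = 0) := by
    rw [hp]; exact mono _ _ (fun u h => h.1)
  have hsplit : pr q (fun u => fY u 0 = 0) + pr q (fun u => fY u 0 = 1) ≤ 1 := by
    rw [← hqsum]
    unfold pr
    rw [← Finset.sum_union]
    · apply Finset.sum_le_sum_of_subset_of_nonneg
      · intro u _; exact Finset.mem_univ u
      · intro u _ _; exact hq u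
    · rw [Finset.disjoint_left]
      intro u hu hu'
      simp only [Finset.mem_filter, Finset.mem_univ, true_and] at hu hu'
      rw [hu] at hu'; exact absurd hu' (by decide)
  linarith
end

section
/- In the same response-function model as Figure 1b (latent U independent of randomized X, potential outcomes Y(0), Y(1), observation indicator O a function of U and Y), with θ = P(Y(1)=1) − P(Y(0)=1) and p_{y1.x} = P(Y(x)=y, O=1), it holds that θ ≤ −p_{01.1} − p_{11.0} + 1. -/
open Finset

open scoped Classical in
lemma pr_mono {Ω : Type*} [Fintype Ω] (w : Ω → ℝ) (hw : ∀ u, 0 ≤ w u)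
    (A B : Ω → Prop) (h : ∀ u, A u → B u) : pr w A ≤ pr w B := by
  apply Finset.sum_le_sum_of_subset_of_nonneg
  · intro u hu
    simp only [Finset.mem_filter, Finset.mem_univ, true_and] at *
    exact h u hu
  · intro i _ _; exact hw i

open scoped Classical in
lemma pr_compl {Ω : Type*} [Fintype Ω] (w : Ω → ℝ) (hsum : ∑ u, w u = 1)
    (A : Ω → Prop) : pr w A = 1 - pr w (fun u => ¬ A u) := by
  have : pr w A + pr w (fun u => ¬ A u) = 1 := by
    rw [← hsum]
    unfold pr
    rw [← Finset.sum_filter_add_sum_filter_not Finset.univ A w]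
    congr 1
    exact Finset.sum_congr (Finset.filter_congr_decidable ..) (fun _ _ => rfl)
  linarith

/-- Figure 1b response-function model (latent `U` independent of
randomized `X`, potential outcomes `fY u x`, observation status `fO u y` a function of
`U` and the realized outcome `Y`), upper bound `θ ≤ −p_{01.1} − p_{11.0} + 1`
where `p y x = P(Y(x) = y, O = 1)`. -/
theorem fig1b_upper_first {U : Type*} [Fintype U]
    (q : U → ℝ) (hq : ∀ u, 0 ≤ q u) (hqsum : ∑ u, q u = 1)
    (fY : U → Fin 2 → Fin 2) (fO : U → Fin 2 → Fin 2)
    (θ : ℝ)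
    (hθ : θ = pr q (fun u => fY u 1 = 1) - pr q (fun u => fY u 0 = 1))
    (p : Fin 2 → Fin 2 → ℝ)
    (hp : ∀ y x, p y x = pr q (fun u => fY u x = y ∧ fO u (fY u x) = 1)) :
    θ ≤ -(p 0 1) - p 1 0 + 1 := by
  have h1 : pr q (fun u => fY u 1 = 1) ≤ 1 - p 0 1 := by
    rw [pr_compl q hqsum, hp 0 1]
    have := pr_mono q hq (fun u => fY u 1 = (0 : Fin 2) ∧ fO u (fY u 1) = 1)
      (fun u => ¬ fY u 1 = 1) (by intro u h; rw [h.1]; decide)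
    linarith
  have h2 : p 1 0 ≤ pr q (fun u => fY u 0 = 1) := by
    rw [hp 1 0]
    exact pr_mono q hq _ _ (fun u h => h.1)
  linarith
end

section
/- In the same response-function model as Figures 2c–2e, with θ = P(Y(1)=1) − P(Y(0)=1) and p_{xy1.r} = P(X=x, Y=y, O=1 | R=r), it holds that θ ≤ 1 − p_{101.r} − p_{011.r'} for any r, r' ∈ {0,1}. -/
open Finset

/-- same response-function model as Figures 2c–2e.  For all `r, r'`:
`θ ≤ 1 − p_{101.r} − p_{011.r'}`, where `p x y r = P(X = x, Y = y, O = 1 ∣ R = r)`. -/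
theorem fig2cde_upper {U : Type*} [Fintype U]
    (q : U → ℝ) (hq : ∀ u, 0 ≤ q u) (hqsum : ∑ u, q u = 1)
    (fX : U → Fin 2 → Fin 2) (fY : U → Fin 2 → Fin 2) (fO : U → Fin 2 → Fin 2)
    (θ : ℝ)
    (hθ : θ = pr q (fun u => fY u 1 = 1) - pr q (fun u => fY u 0 = 1))
    (p : Fin 2 → Fin 2 → Fin 2 → ℝ)
    (hp : ∀ x y r, p x y r =
      pr q (fun u => fX u r = x ∧ fY u (fX u r) = y ∧ fO u r = 1)) :
    ∀ r r' : Fin 2, θ ≤ 1 - p 1 0 r - p 0 1 r' := by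
  classical
  intro r r'
  have pr_mono : ∀ (A B : U → Prop), (∀ u, A u → B u) → pr q A ≤ pr q B := by
    intro A B h
    unfold pr
    apply Finset.sum_le_sum_of_subset_of_nonneg
    · intro u hu
      simp only [Finset.mem_filter, Finset.mem_univ, true_and] at *
      exact h u hu
    · intro u _ _; exact hq u
  have h1 : p 1 0 r ≤ pr q (fun u => ¬ (fY u 1 = 1)) := by
    rw [hp]
    apply pr_mono
    rintro u ⟨hx, hy, -⟩ h
    rw [hx] at hy
    rw [hy] at h
    exact absurd h (by decide)
  have h2 : p 0 1 r' ≤ pr q (fun u => fY u 0 = 1) := by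
    rw [hp]
    apply pr_mono
    rintro u ⟨hx, hy, -⟩
    rwa [hx] at hy
  have h3 : pr q (fun u => fY u 1 = 1) + pr q (fun u => ¬ (fY u 1 = 1)) = 1 := by
    unfold pr
    rw [Finset.sum_filter_add_sum_filter_not]
    exact hqsum
  linarith
end

section
/- In the response-function model of Figures 2c–2e with the additional no-defiers assumption X(1) ≥ X(0) almost surely, the Result 7 bounds max over r,r' of {p_{001.r} + p_{111.r'} − 1} ≤ θ ≤ min over r,r' of {1 − p_{101.r} − p_{011.r'}} are valid. -/
open Finset

/-- Figures 2c–2e response-function model with the additional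
no-defiers assumption `X(1) ≥ X(0)` almost surely; the Result 7 bounds
`max_{r,r'} {p_{001.r} + p_{111.r'} − 1} ≤ θ ≤ min_{r,r'} {1 − p_{101.r} − p_{011.r'}}`
remain valid. -/
theorem fig2cde_nodefiers_bounds {U : Type*} [Fintype U]
    (q : U → ℝ) (hq : ∀ u, 0 ≤ q u) (hqsum : ∑ u, q u = 1)
    (fX : U → Fin 2 → Fin 2) (fY : U → Fin 2 → Fin 2) (fO : U → Fin 2 → Fin 2)
    (hnodef : ∀ u, 0 < q u → fX u 0 ≤ fX u 1)
    (θ : ℝ)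
    (hθ : θ = pr q (fun u => fY u 1 = 1) - pr q (fun u => fY u 0 = 1))
    (p : Fin 2 → Fin 2 → Fin 2 → ℝ)
    (hp : ∀ x y r, p x y r =
      pr q (fun u => fX u r = x ∧ fY u (fX u r) = y ∧ fO u r = 1)) :
    ∀ r r' : Fin 2, p 0 0 r + p 1 1 r' - 1 ≤ θ ∧ θ ≤ 1 - p 1 0 r - p 0 1 r' := by
  classical
  intro r r'
  subst hθ
  have hpr : ∀ (A : U → Prop), pr q A = ∑ u, if A u then q u else 0 := by
    intro A
    rw [pr, Finset.sum_filter]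
  have hp' : ∀ x y rr, p x y rr =
      ∑ u, if (fX u rr = x ∧ fY u x = y ∧ fO u rr = 1) then q u else 0 := by
    intro x y rr
    rw [hp, hpr]
    apply Finset.sum_congr rfl
    intro u _
    by_cases h : fX u rr = x <;> simp [h]
  constructor
  · rw [hp', hp', hpr, hpr, ← hqsum,
      ← Finset.sum_add_distrib, ← Finset.sum_sub_distrib, ← Finset.sum_sub_distrib]
    apply Finset.sum_le_sum
    intro u _
    have h0 := hq u
    split_ifs <;> first | linarith | simp_all
  · rw [hp', hp', hpr, hpr, ← hqsum,
      ← Finset.sum_sub_distrib, ← Finset.sum_sub_distrib, ← Finset.sum_sub_distrib]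
    apply Finset.sum_le_sum
    intro u _
    have h0 := hq u
    split_ifs <;> first | linarith | simp_all
end

section
/- Under the no-defiers assumption X(1) ≥ X(0), in the response-function model of Figure 2a (R randomized independent of latent U; Y determined by U and X; O determined by Y alone, i.e., P(O=1|U,R,X,Y) = P(O=1|Y)), the causal risk difference θ = P(Y(1)=1) − P(Y(0)=1) satisfies P(X=1,Y=1|O=1,R=1)P(O=1|R=1) + P(X=0,Y=0|O=1,R=0)P(O=1|R=0) − 1 ≤ θ ≤ 1 − P(X=1,Y=0|O=1,R=1)P(O=1|R=1) − P(X=0,Y=1|O=1,R=0)P(O=1|R=0). -/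
open Finset

open scoped Classical in
lemma pr_congr {Ω : Type*} [Fintype Ω] (w : Ω → ℝ) (A B : Ω → Prop)
    (h : ∀ ω, A ω ↔ B ω) : pr w A = pr w B := by
  unfold pr
  congr 1
  apply Finset.filter_congr
  intro x _
  simp [h x]

open scoped Classical in
lemma pr_eq_sum_ite {Ω : Type*} [Fintype Ω] (w : Ω → ℝ) (A : Ω → Prop) :
    pr w A = ∑ ω, if A ω then w ω else 0 := by
  rw [pr, Finset.sum_filter]

open scoped Classical in
lemma pr_fact {U V : Type*} [Fintype U] [Fintype V]
    (qU : U → ℝ) (qV : V → ℝ) (ρ : Fin 2 → ℝ)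
    (w : U × V × Fin 2 → ℝ)
    (hw : ∀ ω, w ω = qU ω.1 * qV ω.2.1 * ρ ω.2.2)
    (P : U → Prop) (Q : V → Prop) (r : Fin 2) :
    pr w (fun ω => P ω.1 ∧ Q ω.2.1 ∧ ω.2.2 = r) = pr qU P * pr qV Q * ρ r := by
  rw [pr_eq_sum_ite, pr_eq_sum_ite, pr_eq_sum_ite]
  have key : ∀ (u : U) (v : V) (s : Fin 2),
      (if P u ∧ Q v ∧ s = r then w (u, v, s) else 0)
        = (if P u then qU u else 0) * (if Q v then qV v else 0) *
          (if s = r then ρ s else 0) := by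
    intro u v s
    rw [hw]
    split_ifs <;> simp_all <;> ring
  have expand : (∑ ω : U × V × Fin 2, if P ω.1 ∧ Q ω.2.1 ∧ ω.2.2 = r then w ω else 0)
      = ∑ u, ∑ v, ∑ s, (if P u then qU u else 0) * (if Q v then qV v else 0) *
        (if s = r then ρ s else 0) := by
    rw [Fintype.sum_prod_type]
    refine Finset.sum_congr rfl fun u _ => ?_
    rw [Fintype.sum_prod_type]
    refine Finset.sum_congr rfl fun v _ => ?_
    refine Finset.sum_congr rfl fun s _ => ?_
    exact key u v s
  refine ((Finset.sum_congr rfl fun ω _ => ?_).trans expand).trans ?_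
  · split_ifs <;> rfl
  have hs : ∀ u v, (∑ s : Fin 2, (if P u then qU u else 0) * (if Q v then qV v else 0) *
      (if s = r then ρ s else 0)) = (if P u then qU u else 0) * (if Q v then qV v else 0) * ρ r := by
    intro u v
    rw [← Finset.mul_sum]
    congr 1
    simp
  simp only [hs]
  rw [Finset.sum_mul_sum, Finset.sum_mul]
  exact Finset.sum_congr rfl fun u _ => (Finset.sum_mul ..).symm

open scoped Classical in
lemma pr_nonneg {Ω : Type*} [Fintype Ω] (w : Ω → ℝ) (hw : ∀ ω, 0 ≤ w ω) (A : Ω → Prop) :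
    0 ≤ pr w A :=
  Finset.sum_nonneg fun ω _ => hw ω

open scoped Classical in
lemma pr_le_one {Ω : Type*} [Fintype Ω] (w : Ω → ℝ) (hw : ∀ ω, 0 ≤ w ω)
    (hsum : ∑ ω, w ω = 1) (A : Ω → Prop) : pr w A ≤ 1 := by
  rw [← hsum]
  exact Finset.sum_le_sum_of_subset_of_nonneg (Finset.filter_subset _ _)
    (fun ω _ _ => hw ω)

lemma ptwiseL (q : ℝ) (hq : 0 ≤ q) (x1 x0 y1 y0 : Fin 2) :
    (if x1 = 1 ∧ y1 = 1 then q else 0) + (if x0 = 0 ∧ y0 = 0 then q else 0) - q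
      ≤ (if y1 = 1 then q else 0) - (if y0 = 1 then q else 0) := by
  fin_cases x1 <;> fin_cases x0 <;> fin_cases y1 <;> fin_cases y0 <;>
    simp <;> linarith

lemma ptwiseR (q : ℝ) (hq : 0 ≤ q) (x1 x0 y1 y0 : Fin 2) :
    (if y1 = 1 then q else 0) - (if y0 = 1 then q else 0)
      ≤ q - (if x1 = 1 ∧ y1 = 0 then q else 0) - (if x0 = 0 ∧ y0 = 1 then q else 0) := by
  fin_cases x1 <;> fin_cases x0 <;> fin_cases y1 <;> fin_cases y0 <;>
    simp <;> linarith

/-- Result 5.  Figure 2a response-function model with no defiers: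
latent `U` (confounding `X` and `Y`) with distribution `qU`, independent latent `V`
with distribution `qV` generating `O` from the realized outcome `Y` alone, and the
randomized assignment `R` with distribution `ρ`, independent of `(U, V)`.
On `ω = (u, v, r)`: `X = fX u r`, `Y = fY u X`, `O = fO v Y`, `R = r`.
Then `P(X=1,Y=1∣O=1,R=1)P(O=1∣R=1) + P(X=0,Y=0∣O=1,R=0)P(O=1∣R=0) − 1 ≤ θ
  ≤ 1 − P(X=1,Y=0∣O=1,R=1)P(O=1∣R=1) − P(X=0,Y=1∣O=1,R=0)P(O=1∣R=0)`. -/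
theorem result5_fig2a_nodefiers {U V : Type*} [Fintype U] [Fintype V]
    (qU : U → ℝ) (hqU : ∀ u, 0 ≤ qU u) (hqUsum : ∑ u, qU u = 1)
    (qV : V → ℝ) (hqV : ∀ v, 0 ≤ qV v) (hqVsum : ∑ v, qV v = 1)
    (ρ : Fin 2 → ℝ) (hρ : ∀ r, 0 ≤ ρ r) (hρsum : ∑ r, ρ r = 1)
    (fX : U → Fin 2 → Fin 2) (fY : U → Fin 2 → Fin 2) (fO : V → Fin 2 → Fin 2)
    (hnodef : ∀ u, 0 < qU u → fX u 0 ≤ fX u 1)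
    (w : U × V × Fin 2 → ℝ)
    (hw : ∀ ω, w ω = qU ω.1 * qV ω.2.1 * ρ ω.2.2)
    (X Y O R : U × V × Fin 2 → Fin 2)
    (hX : ∀ ω, X ω = fX ω.1 ω.2.2)
    (hY : ∀ ω, Y ω = fY ω.1 (X ω))
    (hO : ∀ ω, O ω = fO ω.2.1 (Y ω))
    (hR : ∀ ω, R ω = ω.2.2)
    (hpos : ∀ r : Fin 2, 0 < pr w (fun ω => O ω = 1 ∧ R ω = r))
    (hRpos : ∀ r : Fin 2, 0 < pr w (fun ω => R ω = r))
    (θ : ℝ)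
    (hθ : θ = pr qU (fun u => fY u 1 = 1) - pr qU (fun u => fY u 0 = 1)) :
    cpr w (fun ω => X ω = 1 ∧ Y ω = 1) (fun ω => O ω = 1 ∧ R ω = 1) *
        cpr w (fun ω => O ω = 1) (fun ω => R ω = 1) +
      cpr w (fun ω => X ω = 0 ∧ Y ω = 0) (fun ω => O ω = 1 ∧ R ω = 0) *
        cpr w (fun ω => O ω = 1) (fun ω => R ω = 0) - 1 ≤ θ ∧
    θ ≤ 1 -
      cpr w (fun ω => X ω = 1 ∧ Y ω = 0) (fun ω => O ω = 1 ∧ R ω = 1) *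
        cpr w (fun ω => O ω = 1) (fun ω => R ω = 1) -
      cpr w (fun ω => X ω = 0 ∧ Y ω = 1) (fun ω => O ω = 1 ∧ R ω = 0) *
        cpr w (fun ω => O ω = 1) (fun ω => R ω = 0) := by
  classical
  -- P(R = r) = ρ r
  have hprR : ∀ r : Fin 2, pr w (fun ω => R ω = r) = ρ r := by
    intro r
    have h1 : pr w (fun ω => R ω = r)
        = pr w (fun ω => (fun _ : U => True) ω.1 ∧ (fun _ : V => True) ω.2.1 ∧ ω.2.2 = r) := by
      apply pr_congr
      intro ω
      simp [hR ω]
    rw [h1, pr_fact qU qV ρ w hw (fun _ => True) (fun _ => True) r]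
    have hU1 : pr qU (fun _ => True) = 1 := by
      rw [pr_eq_sum_ite]; simpa using hqUsum
    have hV1 : pr qV (fun _ => True) = 1 := by
      rw [pr_eq_sum_ite]; simpa using hqVsum
    rw [hU1, hV1]; ring
  have hρpos : ∀ r : Fin 2, 0 < ρ r := fun r => (hprR r) ▸ hRpos r
  -- the product of conditional probabilities
  have hterm : ∀ (x y r : Fin 2),
      cpr w (fun ω => X ω = x ∧ Y ω = y) (fun ω => O ω = 1 ∧ R ω = r) *
        cpr w (fun ω => O ω = 1) (fun ω => R ω = r)
      = pr qU (fun u => fX u r = x ∧ fY u x = y) * pr qV (fun v => fO v y = 1) := by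
    intro x y r
    unfold cpr
    rw [div_mul_div_comm]
    rw [mul_comm (pr w fun ω => O ω = 1 ∧ R ω = r) (pr w fun ω => R ω = r)]
    rw [mul_div_mul_right _ _ (ne_of_gt (hpos r))]
    have hnum : pr w (fun ω => (X ω = x ∧ Y ω = y) ∧ O ω = 1 ∧ R ω = r)
        = pr qU (fun u => fX u r = x ∧ fY u x = y) * pr qV (fun v => fO v y = 1) * ρ r := by
      rw [← pr_fact qU qV ρ w hw (fun u => fX u r = x ∧ fY u x = y) (fun v => fO v y = 1) r]
      apply pr_congr
      intro ω
      constructor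
      · rintro ⟨⟨hx, hy⟩, ho, hr⟩
        rw [hR ω] at hr
        rw [hX ω, hr] at hx
        rw [hY ω, hX ω, hr, hx] at hy
        rw [hO ω, hY ω, hX ω, hr, hx, hy] at ho
        exact ⟨⟨hx, hy⟩, ho, hr⟩
      · rintro ⟨⟨hx, hy⟩, ho, hr⟩
        have hx' : X ω = x := by rw [hX ω, hr]; exact hx
        have hy' : Y ω = y := by rw [hY ω, hx']; exact hy
        have ho' : O ω = 1 := by rw [hO ω, hy']; exact ho
        exact ⟨⟨hx', hy'⟩, ho', (hR ω).trans hr⟩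
    rw [hnum, hprR r, mul_div_assoc, div_self (ne_of_gt (hρpos r)), mul_one]
  -- abbreviations
  set a11 := pr qU (fun u => fX u 1 = 1 ∧ fY u 1 = 1) with ha11
  set a00 := pr qU (fun u => fX u 0 = 0 ∧ fY u 0 = 0) with ha00
  set a10 := pr qU (fun u => fX u 1 = 1 ∧ fY u 1 = 0) with ha10
  set a01 := pr qU (fun u => fX u 0 = 0 ∧ fY u 0 = 1) with ha01
  have hs1 : 0 ≤ pr qV (fun v => fO v 1 = 1) ∧ pr qV (fun v => fO v 1 = 1) ≤ 1 :=
    ⟨pr_nonneg qV hqV _, pr_le_one qV hqV hqVsum _⟩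
  have hs0 : 0 ≤ pr qV (fun v => fO v 0 = 1) ∧ pr qV (fun v => fO v 0 = 1) ≤ 1 :=
    ⟨pr_nonneg qV hqV _, pr_le_one qV hqV hqVsum _⟩
  have ha11nn : 0 ≤ a11 := pr_nonneg qU hqU _
  have ha00nn : 0 ≤ a00 := pr_nonneg qU hqU _
  have ha10nn : 0 ≤ a10 := pr_nonneg qU hqU _
  have ha01nn : 0 ≤ a01 := pr_nonneg qU hqU _
  -- pointwise inequalities summed over U
  have keyL : a11 + a00 - 1 ≤ θ := by
    rw [hθ, ha11, ha00]
    rw [pr_eq_sum_ite, pr_eq_sum_ite, pr_eq_sum_ite, pr_eq_sum_ite, ← hqUsum]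
    rw [← Finset.sum_sub_distrib, ← Finset.sum_add_distrib, ← Finset.sum_sub_distrib]
    apply Finset.sum_le_sum
    intro u _
    convert ptwiseL (qU u) (hqU u) (fX u 1) (fX u 0) (fY u 1) (fY u 0) using 2 <;> congr!
  have keyR : θ ≤ 1 - a10 - a01 := by
    rw [hθ, ha10, ha01]
    rw [pr_eq_sum_ite, pr_eq_sum_ite, pr_eq_sum_ite, pr_eq_sum_ite, ← hqUsum]
    rw [← Finset.sum_sub_distrib, ← Finset.sum_sub_distrib, ← Finset.sum_sub_distrib]
    apply Finset.sum_le_sum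
    intro u _
    convert ptwiseR (qU u) (hqU u) (fX u 1) (fX u 0) (fY u 1) (fY u 0) using 2 <;> congr!
  have e11 := hterm 1 1 1
  have e00 := hterm 0 0 0
  have e10 := hterm 1 0 1
  have e01 := hterm 0 1 0
  rw [e11, e00, e10, e01]
  constructor
  · nlinarith [hs1.1, hs1.2, hs0.1, hs0.2]
  · nlinarith [hs1.1, hs1.2, hs0.1, hs0.2]
end

section
/- Under perfect compliance, i.e., when P(X = R) = 1, each term of the Result 4 bounds (Figures 2c–2e) reduces so that the bounds p_{001.1}+p_{111.1}−1 ≤ θ and θ ≤ −p_{101.0}−p_{011.0}+1 become exactly the Figure 1c bounds p_{01.0} + p_{11.1} − 1 ≤ θ ≤ −p_{01.1} − p_{11.0} + 1, where p_{y1.x} = P(Y=y, O=1 | X=x). -/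
open Finset

open scoped Classical in
lemma pr_expand (w : Fin 2 × Fin 2 × Fin 2 × Fin 2 → ℝ)
    (A : Fin 2 × Fin 2 × Fin 2 × Fin 2 → Prop) :
    pr w A = ∑ r : Fin 2, ∑ x : Fin 2, ∑ y : Fin 2, ∑ o : Fin 2,
      if A (r,x,y,o) then w (r,x,y,o) else 0 := by
  rw [pr, Finset.sum_filter, Fintype.sum_prod_type]
  simp [Fintype.sum_prod_type]

/-- under perfect compliance (`P(X = R) = 1`) the Result 4
(Figures 2c–2e) bounds reduce exactly to the Figure 1c bounds:
the max of the eight lower-bound terms equals `p_{01.0} + p_{11.1} − 1` and the min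
of the eight upper-bound terms equals `1 − p_{01.1} − p_{11.0}`,
where `p1 y x = P(Y = y, O = 1 ∣ X = x)`.  `ω = (R, X, Y, O)`. -/
theorem result4_reduces_perfect_compliance
    (w : Fin 2 × Fin 2 × Fin 2 × Fin 2 → ℝ)
    (hw : ∀ ω, 0 ≤ w ω) (hwsum : ∑ ω, w ω = 1)
    (hcomp : pr w (fun ω => ω.2.1 = ω.1) = 1)
    (hR : ∀ r : Fin 2, 0 < pr w (fun ω => ω.1 = r))
    (hX : ∀ x : Fin 2, 0 < pr w (fun ω => ω.2.1 = x))
    (p : Fin 2 → Fin 2 → Fin 2 → ℝ)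
    (hp : ∀ x y r, p x y r =
      cpr w (fun ω => ω.2.1 = x ∧ ω.2.2.1 = y ∧ ω.2.2.2 = 1) (fun ω => ω.1 = r))
    (p1 : Fin 2 → Fin 2 → ℝ)
    (hp1 : ∀ y x, p1 y x =
      cpr w (fun ω => ω.2.2.1 = y ∧ ω.2.2.2 = 1) (fun ω => ω.2.1 = x)) :
    max (p 0 0 1 + p 1 1 1 - 1) (max (p 0 0 0 + p 1 1 1 - 1)
      (max (p 0 0 1 + p 1 1 0 - 1) (max (p 0 0 0 + p 1 1 0 - 1)
      (max (2 * p 0 0 1 + p 0 1 0 + p 1 1 0 + p 1 1 1 - 2)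
      (max (2 * p 0 0 0 + p 0 1 1 + p 1 1 0 + p 1 1 1 - 2)
      (max (p 0 0 0 + p 0 0 1 + p 1 0 0 + 2 * p 1 1 1 - 2)
           (p 0 0 0 + p 0 0 1 + p 1 0 1 + 2 * p 1 1 0 - 2))))))) =
      p1 0 0 + p1 1 1 - 1 ∧
    min (-(p 1 0 0) - p 0 1 0 + 1) (min (-(p 1 0 0) - p 0 1 1 + 1)
      (min (-(p 1 0 1) - p 0 1 0 + 1) (min (-(p 1 0 1) - p 0 1 1 + 1)
      (min (-(p 0 0 0) - p 1 0 0 - p 1 0 1 - 2 * p 0 1 1 + 2)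
      (min (-(p 0 0 1) - p 1 0 0 - p 1 0 1 - 2 * p 0 1 0 + 2)
      (min (-(2 * p 1 0 0) - p 0 1 0 - p 0 1 1 - p 1 1 1 + 2)
           (-(2 * p 1 0 1) - p 0 1 0 - p 0 1 1 - p 1 1 0 + 2))))))) =
      1 - p1 0 1 - p1 1 0 := by
  classical
  have E := pr_expand w
  have htot : ∑ r : Fin 2, ∑ x : Fin 2, ∑ y : Fin 2, ∑ o : Fin 2, w (r,x,y,o) = 1 := by
    rw [← hwsum, Fintype.sum_prod_type]
    simp [Fintype.sum_prod_type]
  have t0 : ((0:Fin 2) = 0) = True := by simp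
  have t1 : ((1:Fin 2) = 1) = True := by simp
  have t2 : ((0:Fin 2) = 1) = False := by simp
  have t3 : ((1:Fin 2) = 0) = False := by simp
  rw [E] at hcomp
  simp only [Fin.sum_univ_two] at htot
  simp only [Fin.sum_univ_two, t0, t1, t2, t3, if_true, if_false, and_true, true_and,
    and_false, false_and, add_zero, zero_add] at hcomp
  -- off-diagonal weights vanish
  have z1 : w (0,1,0,0) = 0 := by
    linarith [hw (0,1,0,0), hw (0,1,0,1), hw (0,1,1,0), hw (0,1,1,1),
      hw (1,0,0,0), hw (1,0,0,1), hw (1,0,1,0), hw (1,0,1,1)]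
  have z2 : w (0,1,0,1) = 0 := by
    linarith [hw (0,1,0,0), hw (0,1,0,1), hw (0,1,1,0), hw (0,1,1,1),
      hw (1,0,0,0), hw (1,0,0,1), hw (1,0,1,0), hw (1,0,1,1)]
  have z3 : w (0,1,1,0) = 0 := by
    linarith [hw (0,1,0,0), hw (0,1,0,1), hw (0,1,1,0), hw (0,1,1,1),
      hw (1,0,0,0), hw (1,0,0,1), hw (1,0,1,0), hw (1,0,1,1)]
  have z4 : w (0,1,1,1) = 0 := by
    linarith [hw (0,1,0,0), hw (0,1,0,1), hw (0,1,1,0), hw (0,1,1,1),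
      hw (1,0,0,0), hw (1,0,0,1), hw (1,0,1,0), hw (1,0,1,1)]
  have z5 : w (1,0,0,0) = 0 := by
    linarith [hw (0,1,0,0), hw (0,1,0,1), hw (0,1,1,0), hw (0,1,1,1),
      hw (1,0,0,0), hw (1,0,0,1), hw (1,0,1,0), hw (1,0,1,1)]
  have z6 : w (1,0,0,1) = 0 := by
    linarith [hw (0,1,0,0), hw (0,1,0,1), hw (0,1,1,0), hw (0,1,1,1),
      hw (1,0,0,0), hw (1,0,0,1), hw (1,0,1,0), hw (1,0,1,1)]
  have z7 : w (1,0,1,0) = 0 := by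
    linarith [hw (0,1,0,0), hw (0,1,0,1), hw (0,1,1,0), hw (0,1,1,1),
      hw (1,0,0,0), hw (1,0,0,1), hw (1,0,1,0), hw (1,0,1,1)]
  have z8 : w (1,0,1,1) = 0 := by
    linarith [hw (0,1,0,0), hw (0,1,0,1), hw (0,1,1,0), hw (0,1,1,1),
      hw (1,0,0,0), hw (1,0,0,1), hw (1,0,1,0), hw (1,0,1,1)]
  set s0 : ℝ := w (0,0,0,0) + w (0,0,0,1) + w (0,0,1,0) + w (0,0,1,1) with hs0
  set s1 : ℝ := w (1,1,0,0) + w (1,1,0,1) + w (1,1,1,0) + w (1,1,1,1) with hs1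
  -- denominators
  have dR0 : pr w (fun ω => ω.1 = (0:Fin 2)) = s0 := by
    rw [E]
    simp only [Fin.sum_univ_two, t0, t1, t2, t3, if_true, if_false, add_zero, zero_add, z1, z2, z3, z4]
    ring
  have dR1 : pr w (fun ω => ω.1 = (1:Fin 2)) = s1 := by
    rw [E]
    simp only [Fin.sum_univ_two, t0, t1, t2, t3, if_true, if_false, add_zero, zero_add, z5, z6, z7, z8]
    ring
  have dX0 : pr w (fun ω => ω.2.1 = (0:Fin 2)) = s0 := by
    rw [E]
    simp only [Fin.sum_univ_two, t0, t1, t2, t3, if_true, if_false, add_zero, zero_add, z5, z6, z7, z8]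
    ring
  have dX1 : pr w (fun ω => ω.2.1 = (1:Fin 2)) = s1 := by
    rw [E]
    simp only [Fin.sum_univ_two, t0, t1, t2, t3, if_true, if_false, add_zero, zero_add, z1, z2, z3, z4]
    ring
  have hs0pos : 0 < s0 := by rw [← dR0]; exact hR 0
  have hs1pos : 0 < s1 := by rw [← dR1]; exact hR 1
  -- numerators for p
  have numP : ∀ x y r : Fin 2,
      pr w (fun ω => (ω.2.1 = x ∧ ω.2.2.1 = y ∧ ω.2.2.2 = 1) ∧ ω.1 = r) = w (r,x,y,1) := by
    intro x y r
    rw [E]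
    fin_cases x <;> fin_cases y <;> fin_cases r <;>
      simp (config := { decide := true }) [Fin.sum_univ_two]
  -- numerators for p1
  have numP1 : ∀ y x : Fin 2,
      pr w (fun ω => (ω.2.2.1 = y ∧ ω.2.2.2 = 1) ∧ ω.2.1 = x) = w (0,x,y,1) + w (1,x,y,1) := by
    intro y x
    rw [E]
    fin_cases x <;> fin_cases y <;>
      simp (config := { decide := true }) [Fin.sum_univ_two]
  -- values of p and p1
  have e1 : p 0 0 0 = p1 0 0 := by
    rw [hp, hp1, cpr, cpr, numP, numP1, dR0, dX0, z6]; ring_nf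
  have e2 : p 1 1 1 = p1 1 1 := by
    rw [hp, hp1, cpr, cpr, numP, numP1, dR1, dX1, z4]; ring_nf
  have e3 : p 0 1 0 = p1 1 0 := by
    rw [hp, hp1, cpr, cpr, numP, numP1, dR0, dX0, z8]; ring_nf
  have e4 : p 1 0 1 = p1 0 1 := by
    rw [hp, hp1, cpr, cpr, numP, numP1, dR1, dX1, z2]; ring_nf
  have e5 : p 0 0 1 = 0 := by rw [hp, cpr, numP, z6, zero_div]
  have e6 : p 1 1 0 = 0 := by rw [hp, cpr, numP, z4, zero_div]
  have e7 : p 0 1 1 = 0 := by rw [hp, cpr, numP, z8, zero_div]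
  have e8 : p 1 0 0 = 0 := by rw [hp, cpr, numP, z2, zero_div]
  -- bounds on p1
  have b1 : 0 ≤ p1 0 0 ∧ p1 0 0 ≤ 1 := by
    rw [hp1, cpr, numP1, dX0, z6]
    constructor
    · apply div_nonneg _ hs0pos.le
      linarith [hw (0,0,0,1)]
    · rw [div_le_one hs0pos]
      simp only [hs0]
      linarith [hw (0,0,0,0), hw (0,0,1,0), hw (0,0,1,1)]
  have b2 : 0 ≤ p1 1 1 ∧ p1 1 1 ≤ 1 := by
    rw [hp1, cpr, numP1, dX1, z4]
    constructor
    · apply div_nonneg _ hs1pos.le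
      linarith [hw (1,1,1,1)]
    · rw [div_le_one hs1pos]
      simp only [hs1]
      linarith [hw (1,1,0,0), hw (1,1,0,1), hw (1,1,1,0)]
  have b3 : 0 ≤ p1 1 0 ∧ p1 1 0 ≤ 1 := by
    rw [hp1, cpr, numP1, dX0, z8]
    constructor
    · apply div_nonneg _ hs0pos.le
      linarith [hw (0,0,1,1)]
    · rw [div_le_one hs0pos]
      simp only [hs0]
      linarith [hw (0,0,0,0), hw (0,0,0,1), hw (0,0,1,0)]
  have b4 : 0 ≤ p1 0 1 ∧ p1 0 1 ≤ 1 := by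
    rw [hp1, cpr, numP1, dX1, z2]
    constructor
    · apply div_nonneg _ hs1pos.le
      linarith [hw (1,1,0,1)]
    · rw [div_le_one hs1pos]
      simp only [hs1]
      linarith [hw (1,1,0,0), hw (1,1,1,0), hw (1,1,1,1)]
  obtain ⟨b1a, b1b⟩ := b1
  obtain ⟨b2a, b2b⟩ := b2
  obtain ⟨b3a, b3b⟩ := b3
  obtain ⟨b4a, b4b⟩ := b4
  rw [e1, e2, e3, e4, e5, e6, e7, e8]
  constructor
  · apply le_antisymm
    · simp only [max_le_iff]
      refine ⟨?_, ?_, ?_, ?_, ?_, ?_, ?_, ?_⟩ <;> linarith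
    · exact le_max_of_le_right (le_max_left _ _)
  · apply le_antisymm
    · refine le_trans (min_le_of_right_le (min_le_of_right_le (min_le_left _ _))) ?_
      linarith
    · simp only [le_min_iff]
      refine ⟨?_, ?_, ?_, ?_, ?_, ?_, ?_, ?_⟩ <;> linarith
end

section
/- In the response-function model of Figure 2b with no defiers (R randomized independent of latent U, X(1) ≥ X(0) a.s., Y = Y(X) determined by U and X, O determined by U and Y but not directly by X or R), the causal risk difference θ = P(Y(1)=1) − P(Y(0)=1) satisfies θ ≥ p_{001.0} + p_{111.1} − 1, where p_{xy1.r} = P(X=x, Y=y, O=1 | R=r). -/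
open Finset

/-- first lower-bound term of Result 6 (Figure 2b with no defiers):
latent `U` independent of randomized `R`, `X(1) ≥ X(0)` a.s., potential outcomes
`fY u x`, observation `O = fO u y` determined by `U` and the realized outcome only.
Then `θ ≥ p_{001.0} + p_{111.1} − 1`, with `p x y r = P(X = x, Y = y, O = 1 ∣ R = r)`. -/
theorem result6_lower_first {U : Type*} [Fintype U]
    (q : U → ℝ) (hq : ∀ u, 0 ≤ q u) (hqsum : ∑ u, q u = 1)
    (fX : U → Fin 2 → Fin 2) (fY : U → Fin 2 → Fin 2) (fO : U → Fin 2 → Fin 2)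
    (hnodef : ∀ u, 0 < q u → fX u 0 ≤ fX u 1)
    (θ : ℝ)
    (hθ : θ = pr q (fun u => fY u 1 = 1) - pr q (fun u => fY u 0 = 1))
    (p : Fin 2 → Fin 2 → Fin 2 → ℝ)
    (hp : ∀ x y r, p x y r =
      pr q (fun u => fX u r = x ∧ fY u (fX u r) = y ∧ fO u (fY u (fX u r)) = 1)) :
    p 0 0 0 + p 1 1 1 - 1 ≤ θ := by
  classical
  subst hθ
  rw [hp, hp]
  unfold pr
  rw [← hqsum]
  simp only [Finset.sum_filter]
  rw [← Finset.sum_add_distrib, ← Finset.sum_sub_distrib, ← Finset.sum_sub_distrib]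
  apply Finset.sum_le_sum
  intro u _
  have hqu := hq u
  have two : ∀ a : Fin 2, a = 0 ∨ a = 1 := by decide
  rcases two (fX u 0) with h1 | h1 <;> rcases two (fX u 1) with h2 | h2 <;>
    rcases two (fY u 0) with h3 | h3 <;> rcases two (fY u 1) with h4 | h4 <;>
    simp [h1, h2, h3, h4] <;>
    first
      | linarith
      | (split_ifs <;> simp_all <;> linarith)
end

section
/- In the response-function model of Figure 1b (X randomized independent of latent U; Y(x) and O determined by U with O possibly depending on Y), the causal risk difference θ = P(Y(1)=1) − P(Y(0)=1) satisfies θ ≥ −p_{11.0} + 2p_{11.1} − 1 and θ ≥ 2p_{01.0} − p_{01.1} − 1, where p_{y1.x} = P(Y(x)=y, O=1). -/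
open Finset

lemma point1 (qu : ℝ) (hqu : 0 ≤ qu) (a b : Fin 2) (f : Fin 2 → Fin 2) :
    -(if a = 1 ∧ f a = 1 then qu else 0) + 2*(if b = 1 ∧ f b = 1 then qu else 0) - qu
      ≤ (if b = 1 then qu else 0) - (if a = 1 then qu else 0) := by
  fin_cases a <;> fin_cases b <;> split_ifs <;> simp_all <;> linarith

lemma point2 (qu : ℝ) (hqu : 0 ≤ qu) (a b : Fin 2) (f : Fin 2 → Fin 2) :
    2*(if a = 0 ∧ f a = 1 then qu else 0) - (if b = 0 ∧ f b = 1 then qu else 0) - qu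
      ≤ (if b = 1 then qu else 0) - (if a = 1 then qu else 0) := by
  fin_cases a <;> fin_cases b <;> split_ifs <;> simp_all <;> linarith

/-- second and third lower-bound terms of Result 2 (Figure 1b
response-function model: latent `U` independent of randomized `X`, potential
outcomes `fY u x`, observation `O = fO u y` depending on `U` and the realized
outcome, not on `X`): `θ ≥ −p_{11.0} + 2 p_{11.1} − 1` and
`θ ≥ 2 p_{01.0} − p_{01.1} − 1`, where `p y x = P(Y(x) = y, O = 1)`. -/
theorem fig1b_lower_rest {U : Type*} [Fintype U]
    (q : U → ℝ) (hq : ∀ u, 0 ≤ q u) (hqsum : ∑ u, q u = 1)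
    (fY : U → Fin 2 → Fin 2) (fO : U → Fin 2 → Fin 2)
    (θ : ℝ)
    (hθ : θ = pr q (fun u => fY u 1 = 1) - pr q (fun u => fY u 0 = 1))
    (p : Fin 2 → Fin 2 → ℝ)
    (hp : ∀ y x, p y x = pr q (fun u => fY u x = y ∧ fO u (fY u x) = 1)) :
    -(p 1 0) + 2 * p 1 1 - 1 ≤ θ ∧ 2 * p 0 0 - p 0 1 - 1 ≤ θ := by
  classical
  rw [hθ, hp, hp, hp, hp]
  rw [pr_eq_sum_ite, pr_eq_sum_ite, pr_eq_sum_ite, pr_eq_sum_ite, pr_eq_sum_ite, pr_eq_sum_ite]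
  constructor
  · have h := Finset.sum_le_sum (fun u (_ : u ∈ Finset.univ) =>
      point1 (q u) (hq u) (fY u 0) (fY u 1) (fO u))
    simp only [Finset.sum_add_distrib, Finset.sum_sub_distrib, ← Finset.mul_sum,
      Finset.sum_neg_distrib, hqsum] at h
    convert h using 7 <;> rfl
  · have h := Finset.sum_le_sum (fun u (_ : u ∈ Finset.univ) =>
      point2 (q u) (hq u) (fY u 0) (fY u 1) (fO u))
    simp only [Finset.sum_add_distrib, Finset.sum_sub_distrib, ← Finset.mul_sum,
      Finset.sum_neg_distrib, hqsum] at h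
    convert h using 7 <;> rfl
end

section
/- In the response-function model of Figure 1b, θ = P(Y(1)=1) − P(Y(0)=1) satisfies θ ≤ −2p_{11.0} + p_{11.1} + 1 and θ ≤ p_{01.0} − 2p_{01.1} + 1, where p_{y1.x} = P(Y(x)=y, O=1). -/
open Finset

lemma fin2_cases (x : Fin 2) : x = 0 ∨ x = 1 := by omega

/-- second and third upper-bound terms of Result 2 (Figure 1b
response-function model: latent `U` independent of randomized `X`, potential
outcomes `fY u x`, observation `O = fO u y` a function of `U` and the realized
outcome, not of `X`): `θ ≤ −2 p_{11.0} + p_{11.1} + 1` and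
`θ ≤ p_{01.0} − 2 p_{01.1} + 1`, where `p y x = P(Y(x) = y, O = 1)`. -/
theorem fig1b_upper_rest {U : Type*} [Fintype U]
    (q : U → ℝ) (hq : ∀ u, 0 ≤ q u) (hqsum : ∑ u, q u = 1)
    (fY : U → Fin 2 → Fin 2) (fO : U → Fin 2 → Fin 2)
    (θ : ℝ)
    (hθ : θ = pr q (fun u => fY u 1 = 1) - pr q (fun u => fY u 0 = 1))
    (p : Fin 2 → Fin 2 → ℝ)
    (hp : ∀ y x, p y x = pr q (fun u => fY u x = y ∧ fO u (fY u x) = 1)) :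
    θ ≤ -(2 * p 1 0) + p 1 1 + 1 ∧ θ ≤ p 0 0 - 2 * p 0 1 + 1 := by
  classical
  subst hθ
  rw [hp 1 0, hp 1 1, hp 0 0, hp 0 1]
  simp only [pr, Finset.sum_filter]
  rw [show (1:ℝ) = ∑ u, q u from hqsum.symm]
  constructor
  · rw [← Finset.sum_sub_distrib, Finset.mul_sum, ← Finset.sum_neg_distrib,
      ← Finset.sum_add_distrib, ← Finset.sum_add_distrib]
    apply Finset.sum_le_sum
    intro u _
    have hqu := hq u
    rcases fin2_cases (fY u 0) with h0 | h0 <;> rcases fin2_cases (fY u 1) with h1 | h1 <;>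
      simp only [h0, h1] <;>
      rcases fin2_cases (fO u 0) with e0 | e0 <;> rcases fin2_cases (fO u 1) with e1 | e1 <;>
      simp [e0, e1] <;> linarith
  · rw [← Finset.sum_sub_distrib, Finset.mul_sum, ← Finset.sum_sub_distrib,
      ← Finset.sum_add_distrib]
    apply Finset.sum_le_sum
    intro u _
    have hqu := hq u
    rcases fin2_cases (fY u 0) with h0 | h0 <;> rcases fin2_cases (fY u 1) with h1 | h1 <;>
      simp only [h0, h1] <;>
      rcases fin2_cases (fO u 0) with e0 | e0 <;> rcases fin2_cases (fO u 1) with e1 | e1 <;>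
      simp [e0, e1] <;> linarith
end
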